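/- Let G = (V, E) be a connected simple undirected graph on N vertices, and let σ : ℝ → ℝ be an activation function for which there exist t₀ ∈ ℝ and an open interval U containing t₀ such that σ is continuously differentiable on U and σ'(t₀) ≠ 0. Then for every invertible matrix M ∈ GL_N(ℝ), every nonempty compact set K ⊂ ℝ^N, and every ε > 0, there exists a finite-depth feedforward σ-network N : ℝ^N → ℝ^N, whose weight matrix in every layer is G-sparse (each layer has the form z ↦ σ(W z + b) componentwise, composed with a final affine map, with every weight matrix W being G-sparse), such that sup_{x ∈ K} ‖N(x) − M x‖_∞ < ε. -/

import Mathlib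

/-!
Connectivity makes every matrix a product of `G`-sparse ones: diagonal matrices and transvections
generate all matrices, a transvection along an edge is `G`-sparse, and along a walk `i ~ v ⋯ j` the
commutator of `T_{iv}(c)` and `T_{vj}(1)` is `T_{ij}(c)`. Each sparse factor `A` is then realised
by one σ-layer `z ↦ σ(t₀ + h A z)`, which for small `h` equals `σ(t₀) + σ'(t₀) h A z` up to `o(h)`
uniformly on the bounded set reached; the scale `σ'(t₀) h` and offset `σ(t₀)` picked up by each
layer are absorbed by the next one, and the final affine map removes the last of them.
-/

open Matrix

/-- A matrix `W` is `G`-sparse if, for `i ≠ j`, the off-diagonal entries `W i j`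
may be nonzero only when `{i, j}` is an edge of `G` (diagonal entries are free). -/
def IsGSparse {N : ℕ} (G : SimpleGraph (Fin N)) (W : Matrix (Fin N) (Fin N) ℝ) : Prop :=
  ∀ i j : Fin N, i ≠ j → ¬ G.Adj i j → W i j = 0

/-- One `σ`-layer: `z ↦ σ (W z + b)`, with `σ` applied componentwise. -/
def sigmaLayer {N : ℕ} (σ : ℝ → ℝ) (W : Matrix (Fin N) (Fin N) ℝ) (b : Fin N → ℝ)
    (z : Fin N → ℝ) : Fin N → ℝ :=
  fun i => σ ((W.mulVec z + b) i)

/-- Forward pass through `m` `σ`-layers. -/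
def sigmaForward {N : ℕ} (σ : ℝ → ℝ) : (m : ℕ) → (Fin m → Matrix (Fin N) (Fin N) ℝ) →
    (Fin m → (Fin N → ℝ)) → (Fin N → ℝ) → (Fin N → ℝ)
  | 0, _, _, x => x
  | m + 1, W, b, x =>
      sigmaLayer σ (W (Fin.last m)) (b (Fin.last m))
        (sigmaForward σ m (fun ℓ => W ℓ.castSucc) (fun ℓ => b ℓ.castSucc) x)

section Commutator

variable {n R : Type*} [Fintype n] [DecidableEq n] [CommRing R]

theorem transvection_commutator {i v j : n} (hiv : i ≠ v) (hvj : v ≠ j) (hij : i ≠ j) (c : R) :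
    transvection i v c * transvection v j 1 * transvection i v (-c) * transvection v j (-1) =
      transvection i j c := by
  simp [transvection, add_mul, mul_add, single_mul_single_of_ne, hiv.symm, hvj.symm,
    hij.symm, ← single_neg]
  abel

end Commutator

variable {N : ℕ} {G : SimpleGraph (Fin N)}

theorem IsGSparse.smul {A : Matrix (Fin N) (Fin N) ℝ} (hA : IsGSparse G A) (r : ℝ) :
    IsGSparse G (r • A) := fun i j hij hadj => by simp [hA i j hij hadj]

theorem isGSparse_diagonal (d : Fin N → ℝ) : IsGSparse G (diagonal d) :=
  fun _ _ hij _ => diagonal_apply_ne _ hij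

theorem isGSparse_transvection {i j : Fin N} (h : G.Adj i j) (c : ℝ) :
    IsGSparse G (transvection i j c) := by
  intro a b hab hadj
  have : ¬(i = a ∧ j = b) := by rintro ⟨rfl, rfl⟩; exact hadj h
  simp [transvection, one_apply_ne hab, single_apply_of_ne (h := this)]

theorem transvection_mem_closure_isGSparse {i j : Fin N} (w : G.Walk i j) (hij : i ≠ j) (c : ℝ) :
    transvection i j c ∈ Submonoid.closure {A | IsGSparse G A} := by
  induction w generalizing c with
  | nil => exact absurd rfl hij
  | @cons i v j hadj w ih =>
    by_cases hvj : v = j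
    · subst hvj
      exact Submonoid.subset_closure (isGSparse_transvection hadj c)
    · have hiv := hadj.ne
      rw [← transvection_commutator hiv hvj hij c]
      have hT : ∀ c, transvection i v c ∈ Submonoid.closure {A | IsGSparse G A} := fun c =>
        Submonoid.subset_closure (isGSparse_transvection hadj c)
      exact mul_mem (mul_mem (mul_mem (hT c) (ih hvj 1)) (hT (-c))) (ih hvj (-1))

theorem mem_closure_isGSparse (hG : G.Connected) (M : Matrix (Fin N) (Fin N) ℝ) :
    M ∈ Submonoid.closure {A | IsGSparse G A} :=
  diagonal_transvection_induction (· ∈ Submonoid.closure {A | IsGSparse G A}) M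
    (fun D _ => Submonoid.subset_closure (isGSparse_diagonal D))
    (fun t => (hG.preconnected t.i t.j).elim
      fun w => transvection_mem_closure_isGSparse w t.hij t.c)
    (fun _ _ => mul_mem)

theorem HasDerivAt.exists_pos_forall_abs_sub_le {σ : ℝ → ℝ} {c t₀ : ℝ} (hσ : HasDerivAt σ c t₀)
    {R η : ℝ} (hR : 0 ≤ R) (hη : 0 < η) :
    ∃ h > 0, ∀ t, |t| ≤ R → |σ (t₀ + h * t) - σ t₀ - c * (h * t)| ≤ η * h := by
  have hR₁ : 0 < R + 1 := by linarith
  obtain ⟨δ, hδ, hsmall⟩ := Metric.eventually_nhds_iff.mp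
    ((hasDerivAt_iff_isLittleO_nhds_zero.mp hσ).def (div_pos hη hR₁))
  set h := δ / (R + 1)
  have hh : 0 < h := div_pos hδ hR₁
  have hhR : h * (R + 1) = δ := div_mul_cancel₀ δ hR₁.ne'
  refine ⟨h, hh, fun t ht => ?_⟩
  have hht : |h * t| ≤ h * R := by
    rw [abs_mul, abs_of_pos hh]; gcongr
  have hlin := @hsmall (h * t) (by rw [dist_zero_right, Real.norm_eq_abs]; nlinarith)
  rw [Real.norm_eq_abs, Real.norm_eq_abs, smul_eq_mul, mul_comm (h * t)] at hlin
  calc |σ (t₀ + h * t) - σ t₀ - c * (h * t)| ≤ η / (R + 1) * |h * t| := hlin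
    _ ≤ η / (R + 1) * (h * (R + 1)) := by gcongr; linarith
    _ = η * h := by field_simp

theorem HasDerivAt.exists_pos_forall_norm_sub_le {ι : Type*} [Fintype ι] {σ : ℝ → ℝ} {c t₀ : ℝ}
    (hσ : HasDerivAt σ c t₀) {R η : ℝ} (hR : 0 ≤ R) (hη : 0 < η) :
    ∃ h > 0, ∀ v : ι → ℝ, ‖v‖ ≤ R →
      ‖(fun i => σ (t₀ + h * v i)) - (fun _ => σ t₀) - (c * h) • v‖ ≤ η * h := by
  obtain ⟨h, hh, hlin⟩ := hσ.exists_pos_forall_abs_sub_le hR hη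
  refine ⟨h, hh, fun v hv => (pi_norm_le_iff_of_nonneg (by positivity)).mpr fun i => ?_⟩
  simpa [Real.norm_eq_abs, mul_assoc] using hlin (v i) ((norm_le_pi_norm v i).trans hv)

theorem sigmaForward_snoc {m : ℕ} (σ : ℝ → ℝ) (W : Fin m → Matrix (Fin N) (Fin N) ℝ)
    (bb : Fin m → Fin N → ℝ) (A : Matrix (Fin N) (Fin N) ℝ) (b x : Fin N → ℝ) :
    sigmaForward σ (m + 1) (Fin.snoc W A) (Fin.snoc bb b) x =
      sigmaLayer σ A b (sigmaForward σ m W bb x) := by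
  simp [sigmaForward]

theorem sigmaLayer_smul_sub (σ : ℝ → ℝ) (A : Matrix (Fin N) (Fin N) ℝ) (t₀ h s : ℝ)
    (β z : Fin N → ℝ) :
    sigmaLayer σ ((h * s⁻¹) • A) ((fun _ => t₀) - (h * s⁻¹) • (A *ᵥ β)) z =
      fun i => σ (t₀ + h * (A *ᵥ (s⁻¹ • (z - β))) i) := by
  ext i
  simp only [sigmaLayer, smul_mulVec, mulVec_smul, mulVec_sub, Pi.add_apply, Pi.sub_apply,
    Pi.smul_apply, smul_eq_mul]
  congr 1
  ring

open scoped Matrix.Norms.Operator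

/-- A single σ-layer reproduces a linear map only up to the factor `σ'(t₀) h`, so approximation
is measured after decoding the output by `z ↦ s⁻¹ (z - β)`. -/
def SparseNetworkApproximates (G : SimpleGraph (Fin N)) (σ : ℝ → ℝ) (K : Set (Fin N → ℝ))
    (A : Matrix (Fin N) (Fin N) ℝ) : Prop :=
  ∀ ε > 0, ∃ (m : ℕ) (W : Fin m → Matrix (Fin N) (Fin N) ℝ) (bb : Fin m → Fin N → ℝ) (s : ℝ)
    (β : Fin N → ℝ), (∀ ℓ, IsGSparse G (W ℓ)) ∧
      ∀ x ∈ K, ‖s⁻¹ • (sigmaForward σ m W bb x - β) - A *ᵥ x‖ ≤ ε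

theorem sparseNetworkApproximates_one (σ : ℝ → ℝ) (K : Set (Fin N → ℝ)) :
    SparseNetworkApproximates G σ K 1 := fun _ hε =>
  ⟨0, Fin.elim0, Fin.elim0, 1, 0, Fin.rec0, fun x _ => by simp [sigmaForward, hε.le]⟩

theorem SparseNetworkApproximates.isGSparse_mul {σ : ℝ → ℝ} {c t₀ : ℝ} (hσ : HasDerivAt σ c t₀)
    (hc : c ≠ 0) {K : Set (Fin N → ℝ)} (hK : Bornology.IsBounded K)
    {A P : Matrix (Fin N) (Fin N) ℝ} (hA : IsGSparse G A)
    (hP : SparseNetworkApproximates G σ K P) :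
    SparseNetworkApproximates G σ K (A * P) := by
  intro ε hε
  obtain ⟨C, hC₀, hC⟩ := hK.exists_pos_norm_le
  set δ := ε / (2 * (‖A‖ + 1))
  have hδ : 0 < δ := by positivity
  have hAδ : ‖A‖ * δ ≤ ε / 2 :=
    calc ‖A‖ * δ ≤ (‖A‖ + 1) * δ := by gcongr; linarith
      _ = ε / 2 := by simp only [δ]; field_simp
  obtain ⟨m, W, bb, s, β, hW, hPx⟩ := hP δ hδ
  obtain ⟨h, hh, hlin⟩ := hσ.exists_pos_forall_norm_sub_le (ι := Fin N)
    (R := ‖A‖ * (‖P‖ * C + δ)) (by positivity) (η := |c| * ε / 2) (by positivity)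
  refine ⟨m + 1, Fin.snoc W ((h * s⁻¹) • A), Fin.snoc bb ((fun _ => t₀) - (h * s⁻¹) • (A *ᵥ β)),
    c * h, fun _ => σ t₀, fun ℓ => ?_, fun x hx => ?_⟩
  · refine Fin.lastCases ?_ (fun ℓ => ?_) ℓ
    · simpa using hA.smul (h * s⁻¹)
    · simpa using hW ℓ
  rw [sigmaForward_snoc, sigmaLayer_smul_sub]
  set y := s⁻¹ • (sigmaForward σ m W bb x - β)
  have hy : ‖y - P *ᵥ x‖ ≤ δ := hPx x hx
  have hAy : ‖A *ᵥ y - (A * P) *ᵥ x‖ ≤ ε / 2 := by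
    rw [← mulVec_mulVec, ← mulVec_sub]
    calc ‖A *ᵥ (y - P *ᵥ x)‖ ≤ ‖A‖ * ‖y - P *ᵥ x‖ := linfty_opNorm_mulVec _ _
      _ ≤ ‖A‖ * δ := by gcongr
      _ ≤ ε / 2 := hAδ
  have hAy_le : ‖A *ᵥ y‖ ≤ ‖A‖ * (‖P‖ * C + δ) := by
    refine (linfty_opNorm_mulVec _ _).trans (mul_le_mul_of_nonneg_left ?_ (norm_nonneg A))
    calc ‖y‖ ≤ ‖P *ᵥ x‖ + ‖y - P *ᵥ x‖ := norm_le_insert' _ _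
      _ ≤ ‖P‖ * C + δ := by
        gcongr
        exact (linfty_opNorm_mulVec _ _).trans (by gcongr; exact hC x hx)
  calc _ = ‖(c * h)⁻¹ • ((fun i => σ (t₀ + h * (A *ᵥ y) i)) - (fun _ => σ t₀)
              - (c * h) • (A *ᵥ y)) + (A *ᵥ y - (A * P) *ᵥ x)‖ := by
        rw [smul_sub _ _ ((c * h) • _), smul_smul, inv_mul_cancel₀ (mul_ne_zero hc hh.ne'),
          one_smul, sub_add_sub_cancel]
    _ ≤ (|c| * h)⁻¹ * (|c| * ε / 2 * h) + ε / 2 := by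
        refine (norm_add_le _ _).trans (add_le_add ?_ hAy)
        rw [norm_smul, Real.norm_eq_abs, abs_inv, abs_mul, abs_of_pos hh]
        gcongr
        exact hlin _ hAy_le
    _ = ε := by field_simp; ring

theorem sparseNetworkApproximates_of_connected (hG : G.Connected) {σ : ℝ → ℝ} {c t₀ : ℝ}
    (hσ : HasDerivAt σ c t₀) (hc : c ≠ 0) {K : Set (Fin N → ℝ)} (hK : Bornology.IsBounded K)
    (M : Matrix (Fin N) (Fin N) ℝ) : SparseNetworkApproximates G σ K M := by
  induction mem_closure_isGSparse hG M using Submonoid.closure_induction_left with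
  | one => exact sparseNetworkApproximates_one σ K
  | mul_left A hA P _ hP => exact hP.isGSparse_mul hσ hc hK hA

theorem sparse_sigma_network_universal_approximation_general {N : ℕ}
    (G : SimpleGraph (Fin N)) (hG : G.Connected)
    (σ : ℝ → ℝ) (t₀ : ℝ) (hd : deriv σ t₀ ≠ 0)
    (M : Matrix (Fin N) (Fin N) ℝ)
    (K : Set (Fin N → ℝ)) (hK : IsCompact K)
    (ε : ℝ) (hε : 0 < ε) :
    ∃ (m : ℕ) (W : Fin m → Matrix (Fin N) (Fin N) ℝ) (bb : Fin m → (Fin N → ℝ))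
      (Wfin : Matrix (Fin N) (Fin N) ℝ) (bfin : Fin N → ℝ),
      (∀ ℓ, IsGSparse G (W ℓ)) ∧ IsGSparse G Wfin ∧
      ∀ x ∈ K, ‖Wfin.mulVec (sigmaForward σ m W bb x) + bfin - M.mulVec x‖ < ε := by
  obtain ⟨m, W, bb, s, β, hW, happrox⟩ := sparseNetworkApproximates_of_connected hG
    (differentiableAt_of_deriv_ne_zero hd).hasDerivAt hd hK.isBounded M (ε / 2) (half_pos hε)
  refine ⟨m, W, bb, diagonal fun _ => s⁻¹, -(s⁻¹ • β), hW, isGSparse_diagonal _, fun x hx => ?_⟩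
  calc _ = ‖s⁻¹ • (sigmaForward σ m W bb x - β) - M *ᵥ x‖ := by
        congr 1; ext i; simp [sub_eq_add_neg]
    _ ≤ ε / 2 := happrox x hx
    _ < ε := half_lt_self hε

/-- Universal approximation by `G`-sparse `σ`-networks: if `G` is connected and `σ` is `C¹`
near some `t₀` with `σ'(t₀) ≠ 0`, then every invertible linear map `x ↦ M x` can be
approximated, uniformly in the sup norm on a nonempty compact set `K`, to within any `ε > 0`
by a finite-depth feedforward `σ`-network (hidden layers `z ↦ σ(W z + b)` followed by a
final affine map) all of whose weight matrices are `G`-sparse. -/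
theorem sparse_sigma_network_universal_approximation {N : ℕ}
    (G : SimpleGraph (Fin N)) (hG : G.Connected)
    (σ : ℝ → ℝ) (t₀ a b : ℝ) (ht₀ : t₀ ∈ Set.Ioo a b)
    (hσ : ContDiffOn ℝ 1 σ (Set.Ioo a b)) (hd : deriv σ t₀ ≠ 0)
    (M : Matrix (Fin N) (Fin N) ℝ) (hM : IsUnit M)
    (K : Set (Fin N → ℝ)) (hK : IsCompact K) (hKne : K.Nonempty)
    (ε : ℝ) (hε : 0 < ε) :
    ∃ (m : ℕ) (W : Fin m → Matrix (Fin N) (Fin N) ℝ) (bb : Fin m → (Fin N → ℝ))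
      (Wfin : Matrix (Fin N) (Fin N) ℝ) (bfin : Fin N → ℝ),
      (∀ ℓ, IsGSparse G (W ℓ)) ∧ IsGSparse G Wfin ∧
      ∀ x ∈ K, ‖Wfin.mulVec (sigmaForward σ m W bb x) + bfin - M.mulVec x‖ < ε :=
  sparse_sigma_network_universal_approximation_general G hG σ t₀ hd M K hK ε hε
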